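/- Let G be a finite connected k-regular simple graph with valency k ≥ 3 and diameter at least 3 (in particular, any distance-regular graph with valency k ≥ 3 and diameter D ≥ 3). Then h_G ≤ (k − 2)/k. -/

import Mathlib

open Finset Matrix

/-- `E[S,T]`: the number of ordered pairs `(x, y)` with `x ∈ S`, `y ∈ T` and `x, y` adjacent. -/
def eB {V : Type} [Fintype V] [DecidableEq V] (G : SimpleGraph V) [DecidableRel G.Adj]
    (S T : Finset V) : ℕ :=
  ((S ×ˢ T).filter fun p => G.Adj p.1 p.2).card

/-- The Cheeger constant of a `k`-regular graph `G`: the infimum of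
`E[S,Sᶜ] / (k·|S|)` over nonempty vertex subsets `S` with `2·|S| ≤ |V|`. -/
noncomputable def cheeger {V : Type} [Fintype V] [DecidableEq V] (G : SimpleGraph V)
    [DecidableRel G.Adj] (k : ℕ) : ℝ :=
  sInf {x : ℝ | ∃ S : Finset V, S.Nonempty ∧ 2 * S.card ≤ Fintype.card V ∧
    x = (eB G S Sᶜ : ℝ) / (k * S.card)}

/-- `θ` is an eigenvalue of the adjacency matrix of `G`. -/
def IsAdjEigenvalue {V : Type} [Fintype V] [DecidableEq V] (G : SimpleGraph V)
    [DecidableRel G.Adj] (θ : ℝ) : Prop :=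
  ∃ f : V → ℝ, f ≠ 0 ∧ G.adjMatrix ℝ *ᵥ f = θ • f

/-- `θ` is the second-largest adjacency eigenvalue of the connected `k`-regular graph `G`,
i.e. the largest eigenvalue distinct from the top eigenvalue `k`
(which has multiplicity one for connected graphs). -/
def IsSecondLargestAdjEigenvalue {V : Type} [Fintype V] [DecidableEq V] (G : SimpleGraph V)
    [DecidableRel G.Adj] (k : ℕ) (θ : ℝ) : Prop :=
  IsAdjEigenvalue G θ ∧ θ ≠ (k : ℝ) ∧ ∀ μ : ℝ, IsAdjEigenvalue G μ → μ ≠ (k : ℝ) → μ ≤ θ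


/-!
Let `C` be a shortest cycle (a connected graph of minimum degree at least 2 is not a tree) and `S`
its vertex set. A trail `p` between two vertices of `C` sharing no edge with `C` closes each of the
two arcs of `C` between its ends into a circuit, so `2 |C| ≤ |C| + 2 |p|`. Taking for `p` a single
edge shows that `C` is chordless: every vertex of `S` has exactly two neighbours in `S`, and
`E[S, Sᶜ] = (k - 2) |S|`. It remains to check `2 |S| ≤ |V|`. If `|C| ≤ 4`, this follows from
`|V| ≥ 2k + 2 ≥ 8`, as two vertices at distance 3 have disjoint closed neighbourhoods. If
`|C| ≥ 5`, taking `p = v - x - w` shows that no vertex `x` off `C` has two neighbours on `C`, so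
choosing for every vertex of `S` one of its `k - 2 ≥ 1` neighbours outside `S` is injective.
-/

namespace SimpleGraph

variable {V : Type} {G : SimpleGraph V}

namespace Walk

variable [DecidableEq V]

lemma IsTrail.two_mul_girth_le {x y : V} {c : G.Walk y y} (hc : c.IsTrail) (hx : x ∈ c.support)
    {p : G.Walk x y} (hp : p.IsTrail) (hpn : ¬p.Nil) (hdisj : c.edges.Disjoint p.edges) :
    2 * G.girth ≤ c.length + 2 * p.length := by
  set t := c.takeUntil x hx
  set d := c.dropUntil x hx
  have hlen : t.length + d.length = c.length := by rw [← length_append, take_spec]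
  have hpos : 0 < p.length := not_nil_iff_lt_length.mp hpn
  have hcirc₁ : (t.append p).IsCircuit := by
    refine ⟨(isTrail_append _ _).mpr ⟨hc.takeUntil hx, hp,
      List.disjoint_of_subset_left (c.edges_takeUntil_subset_edges hx) hdisj⟩, fun h => ?_⟩
    have := congrArg length h
    simp only [length_append, length_nil] at this
    omega
  have hcirc₂ : (d.append p.reverse).IsCircuit := by
    refine ⟨(isTrail_append _ _).mpr ⟨hc.dropUntil hx, hp.reverse, by
      rw [edges_reverse, List.disjoint_reverse_right]
      exact List.disjoint_of_subset_left (c.edges_dropUntil_subset_edges hx) hdisj⟩,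
      fun h => ?_⟩
    have := congrArg length h
    simp only [length_append, length_reverse, length_nil] at this
    omega
  have h₁ := hcirc₁.girth_le_length
  have h₂ := hcirc₂.girth_le_length
  rw [length_append] at h₁ h₂
  rw [length_reverse] at h₂
  omega

lemma IsTrail.length_le_two_mul_of_le_girth {u x y : V} {c : G.Walk u u} (hc : c.IsTrail)
    (hg : c.length ≤ G.girth) (hx : x ∈ c.support) (hy : y ∈ c.support) {p : G.Walk x y}
    (hp : p.IsTrail) (hpn : ¬p.Nil) (hdisj : c.edges.Disjoint p.edges) :
    c.length ≤ 2 * p.length := by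
  have := (hc.rotate hy).two_mul_girth_le ((c.mem_support_rotate_iff y hy).mpr hx) hp hpn
    ((c.rotate_edges y hy).perm.disjoint_left.mpr hdisj)
  rw [length_rotate] at this
  omega

lemma IsCycle.isChordless_of_girth_eq_length {u : V} {c : G.Walk u u} (hc : c.IsCycle)
    (hg : G.girth = c.length) : c.IsChordless := by
  refine isChordless_iff_forall_mem_edges.mpr fun v w hv hw (hvw : G.Adj v w) => ?_
  by_contra hchord
  have hle := hc.isTrail.length_le_two_mul_of_le_girth hg.ge hv hw hvw.isPath_toWalk.isTrail
    (by simp [Adj.toWalk]) (by simpa [hvw.edges_toWalk] using hchord)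
  rw [hvw.length_toWalk] at hle
  have := hc.three_le_length
  omega

lemma IsTrail.eq_of_adj_of_adj_of_notMem_support {u v w x : V} {c : G.Walk u u}
    (hc : c.IsTrail) (hg : c.length ≤ G.girth) (h5 : 5 ≤ c.length) (hv : v ∈ c.support)
    (hw : w ∈ c.support) (hx : x ∉ c.support) (hvx : G.Adj v x) (hwx : G.Adj w x) : v = w := by
  by_contra hvw
  let p : G.Walk v w := cons hvx hwx.symm.toWalk
  have hp : p.IsTrail := by
    simp [p, Adj.toWalk, hvw, hwx.ne']
  have hdisj : c.edges.Disjoint p.edges := by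
    intro e hec hep
    simp only [p, edges_cons, hwx.symm.edges_toWalk, List.mem_cons, List.not_mem_nil,
      or_false] at hep
    rcases hep with rfl | rfl
    · exact hx (c.snd_mem_support_of_mem_edges hec)
    · exact hx (c.fst_mem_support_of_mem_edges hec)
  have := hc.length_le_two_mul_of_le_girth hg hv hw hp (by simp [p]) hdisj
  simp only [p, length_cons, hwx.symm.length_toWalk] at this
  omega

lemma IsCycle.card_support_toFinset {u : V} {c : G.Walk u u} (hc : c.IsCycle) :
    #c.support.toFinset = c.length := by
  have htail : c.support.toFinset = c.support.tail.toFinset := by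
    rw [← c.cons_tail_support, List.toFinset_cons, c.cons_tail_support]
    exact insert_eq_self.mpr (List.mem_toFinset.mpr (end_mem_tail_support hc.not_nil))
  rw [htail, List.toFinset_card_of_nodup hc.support_nodup, List.length_tail, length_support]
  rfl

lemma IsCycle.card_filter_adj_eq_two_of_girth_eq_length [DecidableRel G.Adj] {u v : V}
    {c : G.Walk u u} (hc : c.IsCycle) (hg : G.girth = c.length) (hv : v ∈ c.support) :
    #{w ∈ c.support.toFinset | G.Adj v w} = 2 := by
  have hnbrs : (({w ∈ c.support.toFinset | G.Adj v w} : Finset V) : Set V) =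
      c.toSubgraph.neighborSet v := by
    ext w
    simp only [coe_filter, List.mem_toFinset, Set.mem_ofPred_eq, Subgraph.mem_neighborSet,
      adj_toSubgraph_iff_mem_edges]
    exact ⟨fun ⟨hw, hvw⟩ => (hc.isChordless_of_girth_eq_length hg).mem_edges hv hw hvw,
      fun he => ⟨c.snd_mem_support_of_mem_edges he, c.adj_of_mem_edges he⟩⟩
  rw [← Set.ncard_coe_finset, hnbrs, hc.ncard_neighborSet_toSubgraph_eq_two hv]

end Walk

section

variable [Fintype V] [DecidableRel G.Adj] {k : ℕ}

lemma not_isAcyclic_of_isRegularOfDegree [Nontrivial V] (hconn : G.Connected)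
    (hreg : G.IsRegularOfDegree k) (hk : 2 ≤ k) : ¬G.IsAcyclic := fun hacyc => by
  obtain ⟨v, hv⟩ := (⟨hconn, hacyc⟩ : G.IsTree).exists_vert_degree_one_of_nontrivial
  rw [hreg v] at hv
  omega

lemma two_mul_add_two_le_card_of_three_le_dist [DecidableEq V] (hconn : G.Connected)
    (hreg : G.IsRegularOfDegree k) {x y : V} (hxy : 3 ≤ G.dist x y) :
    2 * k + 2 ≤ Fintype.card V := by
  have hball : ∀ z, ∀ a ∈ insert z (G.neighborFinset z), G.dist z a ≤ 1 := by
    intro z a ha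
    rcases mem_insert.mp ha with rfl | ha
    · simp
    · exact (dist_eq_one_iff_adj.mpr ((G.mem_neighborFinset z a).mp ha)).le
  have hdisj : Disjoint (insert x (G.neighborFinset x)) (insert y (G.neighborFinset y)) := by
    refine Finset.disjoint_left.mpr fun z hzx hzy => ?_
    have := hconn.dist_triangle (u := x) (v := z) (w := y)
    have := hball x z hzx
    have := hball y z hzy
    rw [dist_comm] at this
    omega
  have hcard : ∀ z, #(insert z (G.neighborFinset z)) = k + 1 := fun z => by
    rw [card_insert_of_notMem (G.notMem_neighborFinset_self z), card_neighborFinset_eq_degree,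
      hreg z]
  calc 2 * k + 2 = #(insert x (G.neighborFinset x) ∪ insert y (G.neighborFinset y)) := by
        rw [card_union_of_disjoint hdisj, hcard, hcard]; ring
    _ ≤ Fintype.card V := card_le_univ _

lemma Walk.IsCycle.two_mul_card_support_toFinset_le [DecidableEq V] (hk : 3 ≤ k)
    (hreg : G.IsRegularOfDegree k) {u : V} {c : G.Walk u u} (hc : c.IsCycle)
    (hg : G.girth = c.length) (h5 : 5 ≤ c.length) :
    2 * #c.support.toFinset ≤ Fintype.card V := by
  set S := c.support.toFinset
  have hout : ∀ v ∈ S, ∃ w ∈ Sᶜ, G.Adj v w := by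
    intro v hv
    have hlt : #{w ∈ S | G.Adj v w} < #(G.neighborFinset v) := by
      rw [hc.card_filter_adj_eq_two_of_girth_eq_length hg (List.mem_toFinset.mp hv),
        card_neighborFinset_eq_degree, hreg v]
      omega
    obtain ⟨w, hw, hwS⟩ := exists_mem_notMem_of_card_lt_card hlt
    have hvw := (G.mem_neighborFinset v w).mp hw
    exact ⟨w, mem_compl.mpr fun h => hwS (mem_filter.mpr ⟨h, hvw⟩), hvw⟩
  have hin : ∀ x ∈ Sᶜ, ({v ∈ S | G.Adj v x} : Set V).Subsingleton := by
    intro x hx v ⟨hv, hvx⟩ w ⟨hw, hwx⟩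
    exact hc.isTrail.eq_of_adj_of_adj_of_notMem_support hg.ge h5 (List.mem_toFinset.mp hv)
      (List.mem_toFinset.mp hw) (fun h => mem_compl.mp hx (List.mem_toFinset.mpr h)) hvx hwx
  have := card_le_card_of_forall_subsingleton G.Adj hout hin
  rw [card_compl] at this
  omega

end

end SimpleGraph

section

variable {V : Type} [Fintype V] [DecidableEq V] {G : SimpleGraph V} [DecidableRel G.Adj] {k : ℕ}

lemma eB_eq_sum_card_filter_adj (S T : Finset V) :
    eB G S T = ∑ x ∈ S, #{y ∈ T | G.Adj x y} := by
  rw [eB, card_filter, sum_product]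
  exact sum_congr rfl fun x _ => (card_filter _ _).symm

lemma eB_add_eB_compl (hreg : G.IsRegularOfDegree k) (S : Finset V) :
    eB G S S + eB G S Sᶜ = k * #S := by
  have hsplit : ∀ x, #{y ∈ S | G.Adj x y} + #{y ∈ Sᶜ | G.Adj x y} = k := fun x => by
    rw [← card_union_of_disjoint (disjoint_filter_filter disjoint_compl_right), ← filter_union,
      union_compl, ← SimpleGraph.neighborFinset_eq_filter, G.card_neighborFinset_eq_degree,
      hreg x]
  rw [eB_eq_sum_card_filter_adj, eB_eq_sum_card_filter_adj, ← sum_add_distrib,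
    sum_congr rfl fun x _ => hsplit x, sum_const, smul_eq_mul, mul_comm]

lemma cheeger_le_div (k : ℕ) {S : Finset V} (hS : S.Nonempty)
    (hhalf : 2 * #S ≤ Fintype.card V) : cheeger G k ≤ eB G S Sᶜ / (k * #S) :=
  csInf_le ⟨0, by rintro _ ⟨T, -, -, rfl⟩; positivity⟩ ⟨S, hS, hhalf, rfl⟩

end

/-- A finite connected `k`-regular graph with `k ≥ 3` and diameter at least 3 satisfies
`h_G ≤ (k - 2)/k`. -/
theorem stmt_16 {V : Type} [Fintype V] [DecidableEq V] (G : SimpleGraph V) [DecidableRel G.Adj]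
    (k : ℕ) (hk : 3 ≤ k) (hconn : G.Connected) (hreg : G.IsRegularOfDegree k)
    (hdiam : ∃ x y : V, 3 ≤ G.dist x y) :
    cheeger G k ≤ ((k : ℝ) - 2) / (k : ℝ) := by
  obtain ⟨x, y, hxy⟩ := hdiam
  have : Nontrivial V := ⟨x, y, fun h => by simp [h] at hxy⟩
  obtain ⟨u, c, hc, hg⟩ := SimpleGraph.exists_girth_eq_length.mpr
    (SimpleGraph.not_isAcyclic_of_isRegularOfDegree hconn hreg (by omega))
  set S := c.support.toFinset
  have hinner : eB G S S = 2 * #S := by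
    rw [eB_eq_sum_card_filter_adj, sum_congr rfl fun v hv =>
      hc.card_filter_adj_eq_two_of_girth_eq_length hg (List.mem_toFinset.mp hv),
      sum_const, smul_eq_mul, mul_comm]
  have hcut : (eB G S Sᶜ : ℝ) = (k - 2) * #S := by
    have hsplit := eB_add_eB_compl hreg S
    rw [hinner] at hsplit
    have : 2 * (#S : ℝ) + eB G S Sᶜ = k * #S := by exact_mod_cast hsplit
    linarith
  have hhalf : 2 * #S ≤ Fintype.card V := by
    rcases le_or_gt c.length 4 with h4 | h5
    · have := SimpleGraph.two_mul_add_two_le_card_of_three_le_dist hconn hreg hxy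
      rw [hc.card_support_toFinset]
      omega
    · exact hc.two_mul_card_support_toFinset_le hk hreg hg h5
  have hS : (0 : ℝ) < #S := by
    rw [hc.card_support_toFinset]
    exact Nat.cast_pos.mpr (by have := hc.three_le_length; omega)
  calc cheeger G k ≤ eB G S Sᶜ / (k * #S) :=
        cheeger_le_div k (card_pos.mp (by exact_mod_cast hS)) hhalf
    _ = (k - 2) / k := by rw [hcut, mul_div_mul_right _ _ hS.ne']
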